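/- Let A ∈ ℝ^{d×d} and let Q, W, Σ₀ ∈ ℝ^{d×d} be symmetric positive semidefinite. Suppose t ↦ exp(tA) W exp(tAᵀ) is integrable on [0, ∞) (entrywise) and t ↦ ‖exp(tA)‖₂² is integrable on [0, ∞). Define X := ∫₀^∞ exp(tA) W exp(tAᵀ) dt and, for τ ≥ 0, V(τ) := exp(τA) Σ₀ exp(τAᵀ) + ∫₀^τ exp(tA) W exp(tAᵀ) dt. Then |tr(Q V(τ)) − tr(Q X)| ≤ λ_max(Q) ( tr(Σ₀) ‖exp(τA)‖₂² + tr(W) ∫_τ^∞ ‖exp(tA)‖₂² dt ), where λ_max(Q) is the largest eigenvalue of Q and ‖·‖₂ is the spectral norm. -/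

import Mathlib

open Matrix MeasureTheory

/-- Euclidean norm of a vector. -/
noncomputable def vnorm {ι : Type*} [Fintype ι] (v : ι → ℝ) : ℝ :=
  Real.sqrt (∑ i, v i ^ 2)

/-- Spectral (ℓ²-operator) norm of a real matrix. -/
noncomputable def matSpectralNorm {ι κ : Type*} [Fintype ι] [Fintype κ]
    (M : Matrix ι κ ℝ) : ℝ :=
  ⨆ v : {v : κ → ℝ // vnorm v ≤ 1}, vnorm (M.mulVec v.1)

/-- Largest eigenvalue of a symmetric matrix, as the supremum of the Rayleigh
quotient over unit vectors. -/
noncomputable def lambdaMax {ι : Type*} [Fintype ι] (S : Matrix ι ι ℝ) : ℝ :=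
  ⨆ v : {v : ι → ℝ // vnorm v = 1}, v.1 ⬝ᵥ S.mulVec v.1

/-! Writing `g t = tr(Q e^{tA} W e^{tAᵀ})`, the difference of the two costs is
`tr(Q e^{τA} Σ₀ e^{τAᵀ}) - ∫_τ^∞ g`, a difference of two nonnegative numbers, hence bounded in
absolute value by their sum. Both are controlled by `tr(Q E M Eᵀ) ≤ λ_max(Q) tr(M) ‖E‖₂²` for
positive semidefinite `M`: factor `M = BᵀB` and bound each term `(E b_k)ᵀ Q (E b_k)` first by the
Rayleigh quotient and then by the operator norm. -/

section vnorm

variable {ι κ : Type*} [Fintype ι] [Fintype κ]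

lemma vnorm_eq_norm_toLp (v : ι → ℝ) : vnorm v = ‖(WithLp.toLp 2 v : EuclideanSpace ℝ ι)‖ := by
  simp [vnorm, EuclideanSpace.norm_eq]

lemma vnorm_nonneg (v : ι → ℝ) : 0 ≤ vnorm v := Real.sqrt_nonneg _

lemma vnorm_sq (v : ι → ℝ) : vnorm v ^ 2 = v ⬝ᵥ v := by
  rw [vnorm, Real.sq_sqrt (by positivity)]
  simp only [dotProduct, sq]

lemma vnorm_smul (c : ℝ) (v : ι → ℝ) : vnorm (c • v) = |c| * vnorm v := by
  rw [vnorm_eq_norm_toLp, vnorm_eq_norm_toLp, WithLp.toLp_smul, norm_smul, Real.norm_eq_abs]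

lemma vnorm_eq_zero {v : ι → ℝ} : vnorm v = 0 ↔ v = 0 := by
  rw [vnorm_eq_norm_toLp, norm_eq_zero, WithLp.toLp_eq_zero]

lemma bddAbove_range_of_vnorm_le_one {P : (ι → ℝ) → Prop} (hP : ∀ v, P v → vnorm v ≤ 1)
    {f : (ι → ℝ) → ℝ} (hf : Continuous f) : BddAbove (Set.range fun v : {v // P v} => f v.1) := by
  refine ((isCompact_closedBall (0 : EuclideanSpace ℝ ι) 1).bddAbove_image
    (f := fun x => f x.ofLp) (by fun_prop)).mono ?_
  rintro _ ⟨v, rfl⟩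
  refine ⟨WithLp.toLp 2 v.1, ?_, rfl⟩
  simpa [← vnorm_eq_norm_toLp] using hP v.1 v.2

lemma le_mul_vnorm_sq_of_unit {g : (ι → ℝ) → ℝ} (hg : ∀ (c : ℝ) v, g (c • v) = c ^ 2 * g v)
    {L : ℝ} (hL : ∀ v, vnorm v = 1 → g v ≤ L) (v : ι → ℝ) : g v ≤ L * vnorm v ^ 2 := by
  rcases eq_or_ne (vnorm v) 0 with h0 | h0
  · rw [h0, vnorm_eq_zero.1 h0, ← zero_smul ℝ (0 : ι → ℝ), hg]
    simp
  · have hunit : vnorm ((vnorm v)⁻¹ • v) = 1 := by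
      rw [vnorm_smul, abs_inv, abs_of_nonneg (vnorm_nonneg v), inv_mul_cancel₀ h0]
    calc g v = vnorm v ^ 2 * g ((vnorm v)⁻¹ • v) := by rw [hg]; field_simp
      _ ≤ vnorm v ^ 2 * L := by gcongr; exact hL _ hunit
      _ = L * vnorm v ^ 2 := mul_comm _ _

lemma vnorm_mulVec_sq_le (M : Matrix ι κ ℝ) (v : κ → ℝ) :
    vnorm (M *ᵥ v) ^ 2 ≤ matSpectralNorm M ^ 2 * vnorm v ^ 2 := by
  refine le_mul_vnorm_sq_of_unit (g := fun v => vnorm (M *ᵥ v) ^ 2) (fun c v => ?_)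
    (fun u hu => ?_) v
  · simp only [mulVec_smul, vnorm_smul, mul_pow, sq_abs]
  · have hbdd := bddAbove_range_of_vnorm_le_one (fun _ h => h)
      (show Continuous fun v => vnorm (M *ᵥ v) by simp only [vnorm]; fun_prop)
    exact pow_le_pow_left₀ (vnorm_nonneg _) (le_ciSup hbdd ⟨u, hu.le⟩) 2

lemma dotProduct_mulVec_le_lambdaMax (Q : Matrix ι ι ℝ) (v : ι → ℝ) :
    v ⬝ᵥ Q *ᵥ v ≤ lambdaMax Q * vnorm v ^ 2 := by
  refine le_mul_vnorm_sq_of_unit (g := fun v => v ⬝ᵥ Q *ᵥ v) (fun c v => ?_) (fun u hu => ?_) v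
  · simp only [mulVec_smul, dotProduct_smul, smul_dotProduct, smul_eq_mul]; ring
  · exact le_ciSup (bddAbove_range_of_vnorm_le_one (fun _ h => h.le)
      (show Continuous fun v : ι → ℝ => v ⬝ᵥ Q *ᵥ v by fun_prop)) ⟨u, hu⟩

lemma lambdaMax_nonneg {Q : Matrix ι ι ℝ} (hQ : Q.PosSemidef) : 0 ≤ lambdaMax Q :=
  Real.iSup_nonneg fun v => by simpa using hQ.dotProduct_mulVec_nonneg v.1

end vnorm

section trace

variable {ι κ μ : Type*} [Fintype ι]

lemma exists_eq_transpose_mul_self [DecidableEq ι] {M : Matrix ι ι ℝ} (hM : M.PosSemidef) :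
    ∃ B : Matrix ι ι ℝ, M = Bᵀ * B := by
  open scoped MatrixOrder in
  obtain ⟨B, hB⟩ := CStarAlgebra.nonneg_iff_eq_star_mul_self.mp hM.nonneg
  exact ⟨B, hB⟩

lemma trace_mul_transpose_mul_self [Fintype κ] (Q : Matrix ι ι ℝ) (C : Matrix κ ι ℝ) :
    (Q * (Cᵀ * C)).trace = ∑ k, C k ⬝ᵥ Q *ᵥ C k := by
  rw [trace_mul_cycle']
  simp only [trace, diag, mul_apply, transpose_apply, dotProduct, mulVec, Finset.mul_sum]

lemma trace_transpose_mul_self [Fintype κ] (C : Matrix κ ι ℝ) :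
    (Cᵀ * C).trace = ∑ k, vnorm (C k) ^ 2 := by
  classical
  simpa [vnorm_sq] using trace_mul_transpose_mul_self 1 C

lemma mul_transpose_apply_eq_mulVec (B : Matrix μ ι ℝ) (E : Matrix κ ι ℝ) (k : μ) :
    (B * Eᵀ) k = E *ᵥ B k := by
  ext j
  simp only [mul_apply, transpose_apply, mulVec, dotProduct, mul_comm]

lemma trace_mul_conj_eq_sum [Fintype κ] [Fintype μ] (Q : Matrix κ κ ℝ) (E : Matrix κ ι ℝ)
    (B : Matrix μ ι ℝ) :
    (Q * (E * (Bᵀ * B) * Eᵀ)).trace = ∑ k, (E *ᵥ B k) ⬝ᵥ Q *ᵥ (E *ᵥ B k) := by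
  have hconj : E * (Bᵀ * B) * Eᵀ = (B * Eᵀ)ᵀ * (B * Eᵀ) := by
    simp only [transpose_mul, transpose_transpose, Matrix.mul_assoc]
  simp only [hconj, trace_mul_transpose_mul_self, mul_transpose_apply_eq_mulVec]

variable [Fintype κ] [DecidableEq ι] {Q : Matrix κ κ ℝ} {M : Matrix ι ι ℝ}

lemma trace_mul_conj_nonneg (hQ : Q.PosSemidef) (hM : M.PosSemidef) (E : Matrix κ ι ℝ) :
    0 ≤ (Q * (E * M * Eᵀ)).trace := by
  obtain ⟨B, rfl⟩ := exists_eq_transpose_mul_self hM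
  rw [trace_mul_conj_eq_sum]
  exact Finset.sum_nonneg fun k _ => by simpa using hQ.dotProduct_mulVec_nonneg (E *ᵥ B k)

lemma trace_mul_conj_le (hQ : Q.PosSemidef) (hM : M.PosSemidef) (E : Matrix κ ι ℝ) :
    (Q * (E * M * Eᵀ)).trace ≤ lambdaMax Q * (M.trace * matSpectralNorm E ^ 2) := by
  obtain ⟨B, rfl⟩ := exists_eq_transpose_mul_self hM
  rw [trace_mul_conj_eq_sum, trace_transpose_mul_self, Finset.sum_mul, Finset.mul_sum]
  refine Finset.sum_le_sum fun k _ => ?_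
  calc (E *ᵥ B k) ⬝ᵥ Q *ᵥ (E *ᵥ B k) ≤ lambdaMax Q * vnorm (E *ᵥ B k) ^ 2 :=
        dotProduct_mulVec_le_lambdaMax Q _
    _ ≤ lambdaMax Q * (vnorm (B k) ^ 2 * matSpectralNorm E ^ 2) := by
        rw [mul_comm (vnorm _ ^ 2)]
        exact mul_le_mul_of_nonneg_left (vnorm_mulVec_sq_le E _) (lambdaMax_nonneg hQ)

end trace

section integral

variable {ι α : Type*} [Fintype ι] [MeasurableSpace α] {μ : Measure α}

lemma integrable_trace_mul (Q : Matrix ι ι ℝ) {F : α → Matrix ι ι ℝ}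
    (hF : ∀ i j, Integrable (fun t => F t i j) μ) : Integrable (fun t => (Q * F t).trace) μ := by
  simp only [trace, diag, mul_apply]
  exact integrable_finsetSum _ fun i _ => integrable_finsetSum _ fun j _ => (hF j i).const_mul _

lemma trace_mul_of_integral (Q : Matrix ι ι ℝ) {F : α → Matrix ι ι ℝ}
    (hF : ∀ i j, Integrable (fun t => F t i j) μ) :
    (Q * of fun i j => ∫ t, F t i j ∂μ).trace = ∫ t, (Q * F t).trace ∂μ := by
  simp only [trace, diag, mul_apply, of_apply]
  rw [integral_finsetSum _ fun i _ =>
    integrable_finsetSum _ fun j _ => (hF j i).const_mul (Q i j)]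
  refine Finset.sum_congr rfl fun i _ => ?_
  rw [integral_finsetSum _ fun j _ => (hF j i).const_mul (Q i j)]
  simp only [integral_const_mul]

end integral

/-- **truncation error of the quadratic cost.**
With `X = ∫₀^∞ e^{tA} W e^{tAᵀ} dt` and
`V(τ) = e^{τA} Sig₀ e^{τAᵀ} + ∫₀^τ e^{tA} W e^{tAᵀ} dt`, one has
`|tr(Q V(τ)) − tr(Q X)| ≤ λ_max(Q)(tr(Sig₀)‖e^{τA}‖₂² + tr(W) ∫_τ^∞ ‖e^{tA}‖₂² dt)`. -/
theorem cost_truncation_bound (d : ℕ)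
    (A Q W Sig₀ : Matrix (Fin d) (Fin d) ℝ)
    (hQ : Q.PosSemidef) (hW : W.PosSemidef) (hSig₀ : Sig₀.PosSemidef)
    (hint1 : ∀ i j, IntegrableOn
      (fun t : ℝ =>
        (NormedSpace.exp (t • A) * W * NormedSpace.exp (t • Aᵀ)) i j)
      (Set.Ici 0))
    (hint2 : IntegrableOn
      (fun t : ℝ => matSpectralNorm (NormedSpace.exp (t • A)) ^ 2) (Set.Ici 0))
    (X : Matrix (Fin d) (Fin d) ℝ)
    (hX : X = Matrix.of fun i j => ∫ t in Set.Ici (0 : ℝ),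
      (NormedSpace.exp (t • A) * W * NormedSpace.exp (t • Aᵀ)) i j)
    (V : ℝ → Matrix (Fin d) (Fin d) ℝ)
    (hV : ∀ τ : ℝ, V τ =
      NormedSpace.exp (τ • A) * Sig₀ * NormedSpace.exp (τ • Aᵀ) +
        Matrix.of fun i j => ∫ t in (0 : ℝ)..τ,
          (NormedSpace.exp (t • A) * W * NormedSpace.exp (t • Aᵀ)) i j) :
    ∀ τ : ℝ, 0 ≤ τ →
      |(Q * V τ).trace - (Q * X).trace| ≤
        lambdaMax Q *
          (Sig₀.trace * matSpectralNorm (NormedSpace.exp (τ • A)) ^ 2 +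
            W.trace *
              ∫ t in Set.Ioi τ, matSpectralNorm (NormedSpace.exp (t • A)) ^ 2) := by
  intro τ hτ
  have hexp_transpose (t : ℝ) : NormedSpace.exp (t • Aᵀ) = (NormedSpace.exp (t • A))ᵀ := by
    rw [← transpose_smul, Matrix.exp_transpose]
  have htail_int (i j) : IntegrableOn
      (fun t : ℝ => (NormedSpace.exp (t • A) * W * NormedSpace.exp (t • Aᵀ)) i j) (Set.Ioi τ) :=
    (hint1 i j).mono_set (Set.Ioi_subset_Ici hτ)
  have hX_split : X = (of fun i j => ∫ t in (0 : ℝ)..τ,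
      (NormedSpace.exp (t • A) * W * NormedSpace.exp (t • Aᵀ)) i j) +
      of fun i j => ∫ t in Set.Ioi τ,
        (NormedSpace.exp (t • A) * W * NormedSpace.exp (t • Aᵀ)) i j := by
    ext i j
    rw [hX, Matrix.add_apply, of_apply, of_apply, of_apply, integral_Ici_eq_integral_Ioi,
      intervalIntegral.integral_interval_add_Ioi ((hint1 i j).mono_set Set.Ioi_subset_Ici_self)
        (htail_int i j)]
  have hdiff : (Q * V τ).trace - (Q * X).trace =
      (Q * (NormedSpace.exp (τ • A) * Sig₀ * (NormedSpace.exp (τ • A))ᵀ)).trace -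
        ∫ t in Set.Ioi τ,
          (Q * (NormedSpace.exp (t • A) * W * (NormedSpace.exp (t • A))ᵀ)).trace := by
    rw [hV, hX_split, Matrix.mul_add, Matrix.mul_add, trace_add, trace_add,
      trace_mul_of_integral Q htail_int]
    simp only [hexp_transpose]
    ring
  have htail_le : ∫ t in Set.Ioi τ,
      (Q * (NormedSpace.exp (t • A) * W * (NormedSpace.exp (t • A))ᵀ)).trace ≤
        lambdaMax Q *
          (W.trace * ∫ t in Set.Ioi τ, matSpectralNorm (NormedSpace.exp (t • A)) ^ 2) := by
    rw [← integral_const_mul, ← integral_const_mul]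
    refine integral_mono (by simpa only [hexp_transpose] using integrable_trace_mul Q htail_int)
      (((hint2.mono_set (Set.Ioi_subset_Ici hτ)).const_mul _).const_mul _)
      fun t => trace_mul_conj_le hQ hW _
  have htail_nonneg : 0 ≤ ∫ t in Set.Ioi τ,
      (Q * (NormedSpace.exp (t • A) * W * (NormedSpace.exp (t • A))ᵀ)).trace :=
    integral_nonneg fun t => trace_mul_conj_nonneg hQ hW _
  have hhead_le := trace_mul_conj_le hQ hSig₀ (NormedSpace.exp (τ • A))
  have hhead_nonneg := trace_mul_conj_nonneg hQ hSig₀ (NormedSpace.exp (τ • A))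
  rw [hdiff, abs_le, mul_add]
  constructor <;> linarith
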